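/- arXiv:0810.1187 — 3 statements merged into one kernel-verified Lean document; each statement's English description precedes it below -/
import Mathlib

section
/- Let W_1, ..., W_K and Y be finitely-valued random variables on a probability space, and fix an index i in {1,...,K}. Assume H(W_S) > 0 for every nonempty subset S of {1,...,K}\{i}. Fix ε > 0 and d ∈ [0,1], and define ε* = min over nonempty subsets S of {1,...,K}\{i} of (1 + ε − d)·H(W_S)/H(W_{{1,...,K}\{i}}). If H(W_{{1,...,K}\{i}} | Y) ≥ (1 − ε*)·H(W_{{1,...,K}\{i}}), then for every nonempty subset S of {1,...,K}\{i}, H(W_S | Y) ≥ (d − ε)·H(W_S). (That is, near-perfect equivocation for the full message set implies equivocation at least d − ε for every subset of messages.) -/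
open MeasureTheory ProbabilityTheory

noncomputable section

/-- Shannon entropy `H(X)` of a finitely-valued random variable `X`. -/
def ent {Ω α : Type*} [MeasurableSpace Ω] [Fintype α] (μ : Measure Ω) (X : Ω → α) : ℝ :=
  ∑ a : α, Real.negMulLog ((μ (X ⁻¹' {a})).toReal)

/-- Conditional entropy `H(X|Y)`. -/
def condEnt {Ω α β : Type*} [MeasurableSpace Ω] [Fintype α] [Fintype β]
    (μ : Measure Ω) (X : Ω → α) (Y : Ω → β) : ℝ :=
  ent μ (fun ω => (X ω, Y ω)) - ent μ Y

/-- Mutual information `I(X;Y) = H(X) - H(X|Y)`. -/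
def mutInfo {Ω α β : Type*} [MeasurableSpace Ω] [Fintype α] [Fintype β]
    (μ : Measure Ω) (X : Ω → α) (Y : Ω → β) : ℝ :=
  ent μ X - condEnt μ X Y

/-- Conditional mutual information `I(X;Y|Z) = H(X|Z) - H(X|(Y,Z))`. -/
def condMutInfo {Ω α β γ : Type*} [MeasurableSpace Ω] [Fintype α] [Fintype β] [Fintype γ]
    (μ : Measure Ω) (X : Ω → α) (Y : Ω → β) (Z : Ω → γ) : ℝ :=
  condEnt μ X Z - condEnt μ X (fun ω => (Y ω, Z ω))

/-- The joint random variable `X_S = (X_k)_{k ∈ S}` of a family of random variables. -/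
def joint {Ω : Type*} {K : ℕ} {α : Fin K → Type*} (X : (k : Fin K) → Ω → α k)
    (S : Finset (Fin K)) : Ω → ((k : S) → α k) :=
  fun ω k => X k ω

/-!
`W_S` is a function of `W_T` for `T = 𝒦 ∖ {i}`, so by data processing
`I(W_S; Y) ≤ I(W_T; Y) = H(W_T) - H(W_T | Y) ≤ ε* · H(W_T) ≤ (1 + ε - d) · H(W_S)`,
which rearranges to `H(W_S | Y) ≥ (d - ε) · H(W_S)`.
Data processing `I(g(X); Y) ≤ I(X; Y)` is the log-sum inequality applied on each fibre of `g`,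
and the log-sum inequality is Jensen's inequality for the convex function `x log x`.
-/

namespace Real

open Finset

theorem sum_mul_log_div_sum_le_sum_mul_log_div {ι : Type*} (t : Finset ι) {a b : ι → ℝ}
    (ha : ∀ i ∈ t, 0 ≤ a i) (hb : ∀ i ∈ t, 0 ≤ b i) (hab : ∀ i ∈ t, b i = 0 → a i = 0) :
    (∑ i ∈ t, a i) * log ((∑ i ∈ t, a i) / ∑ i ∈ t, b i) ≤ ∑ i ∈ t, a i * log (a i / b i) := by
  set B := ∑ i ∈ t, b i
  rcases (sum_nonneg hb).eq_or_lt with hB | hB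
  · have ha0 : ∀ i ∈ t, a i = 0 := fun i hi ↦
      hab i hi ((sum_eq_zero_iff_of_nonneg hb).1 hB.symm i hi)
    rw [sum_eq_zero ha0, sum_eq_zero fun i hi ↦ by simp [ha0 i hi], zero_mul]
  · have hmean : ∀ i ∈ t, b i / B * (a i / b i) = a i / B := fun i hi ↦ by
      rcases eq_or_ne (b i) 0 with h | h
      · simp [h, hab i hi h]
      · field_simp
    have jensen := convexOn_mul_log.map_sum_le (t := t) (w := fun i ↦ b i / B)
      (p := fun i ↦ a i / b i) (fun i hi ↦ div_nonneg (hb i hi) hB.le)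
      (by rw [← sum_div, div_self hB.ne']) (fun i hi ↦ div_nonneg (ha i hi) (hb i hi))
    have hrhs : ∀ i ∈ t, b i / B * (a i / b i * log (a i / b i)) = a i * log (a i / b i) / B :=
      fun i hi ↦ by rw [← mul_assoc, hmean i hi, div_mul_eq_mul_div]
    simp only [smul_eq_mul] at jensen
    rw [sum_congr rfl hmean, sum_congr rfl hrhs, ← sum_div, ← sum_div, div_mul_eq_mul_div,
      div_le_div_iff_of_pos_right hB] at jensen
    exact jensen

theorem mul_log_div_eq_sub {x y : ℝ} (h : y = 0 → x = 0) :
    x * log (x / y) = x * log x - x * log y := by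
  rcases eq_or_ne x 0 with rfl | hx
  · simp
  · rw [log_div hx fun hy ↦ hx (h hy), mul_sub]

theorem sum_sum_mul_log_div_sum {ι κ : Type*} [Fintype ι] [Fintype κ] {f : ι → κ → ℝ}
    (hf : ∀ i k, 0 ≤ f i k) :
    ∑ i, ∑ k, f i k * log (f i k / ∑ l, f i l)
      = ∑ i, ∑ k, f i k * log (f i k) - ∑ i, (∑ k, f i k) * log (∑ k, f i k) := by
  rw [← sum_sub_distrib]
  refine sum_congr rfl fun i _ ↦ ?_
  have hzero : ∀ k, (∑ l, f i l = 0 → f i k = 0) := fun k h ↦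
    (sum_eq_zero_iff_of_nonneg fun l _ ↦ hf i l).1 h k (mem_univ k)
  simp only [mul_log_div_eq_sub (hzero _), sum_sub_distrib, ← sum_mul]

end Real

namespace MeasureTheory

variable {Ω α β γ : Type*} [MeasurableSpace Ω] {μ : Measure Ω}

theorem sum_measureReal_preimage_singleton_inter [IsFiniteMeasure μ] [MeasurableSpace α]
    [MeasurableSingletonClass α] {X : Ω → α} (hX : Measurable X) (F : Finset α) (A : Set Ω) :
    ∑ a ∈ F, μ.real (X ⁻¹' {a} ∩ A) = μ.real (X ⁻¹' F ∩ A) := by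
  simp only [← measureReal_restrict_apply (hX (measurableSet_singleton _)),
    ← measureReal_restrict_apply (hX F.measurableSet)]
  exact sum_measureReal_preimage_singleton F fun a _ ↦ hX (measurableSet_singleton a)

variable [Fintype α] [Fintype β] [Fintype γ]

theorem ent_eq_neg_sum_mul_log (X : Ω → α) :
    ent μ X = -∑ a, μ.real (X ⁻¹' {a}) * Real.log (μ.real (X ⁻¹' {a})) := by
  simp [ent, Real.negMulLog, measureReal_def]

theorem ent_pair_eq (X : Ω → α) (Y : Ω → β) :
    ent μ (fun ω ↦ (X ω, Y ω)) =
      -∑ a, ∑ b, μ.real (X ⁻¹' {a} ∩ Y ⁻¹' {b}) * Real.log (μ.real (X ⁻¹' {a} ∩ Y ⁻¹' {b})) := by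
  simp only [ent_eq_neg_sum_mul_log, Fintype.sum_prod_type, ← Set.singleton_prod_singleton,
    Set.mk_preimage_prod]

theorem ent_pair_sub_ent [IsFiniteMeasure μ] [MeasurableSpace β] [MeasurableSingletonClass β]
    (X : Ω → α) {Y : Ω → β} (hY : Measurable Y) :
    ent μ (fun ω ↦ (X ω, Y ω)) - ent μ X =
      -∑ a, ∑ b, μ.real (X ⁻¹' {a} ∩ Y ⁻¹' {b}) *
        Real.log (μ.real (X ⁻¹' {a} ∩ Y ⁻¹' {b}) / μ.real (X ⁻¹' {a})) := by
  have hmarg : ∀ a, μ.real (X ⁻¹' {a}) = ∑ b, μ.real (X ⁻¹' {a} ∩ Y ⁻¹' {b}) := fun a ↦ by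
    simp only [Set.inter_comm (X ⁻¹' _), sum_measureReal_preimage_singleton_inter hY,
      Finset.coe_univ, Set.preimage_univ, Set.univ_inter]
  rw [ent_pair_eq, ent_eq_neg_sum_mul_log X]
  simp only [hmarg, Real.sum_sum_mul_log_div_sum fun _ _ ↦ measureReal_nonneg]
  ring

theorem mutInfo_comp_le [IsFiniteMeasure μ] [MeasurableSpace α] [MeasurableSingletonClass α]
    [MeasurableSpace β] [MeasurableSingletonClass β] {X : Ω → α} {Y : Ω → β}
    (hX : Measurable X) (hY : Measurable Y) (g : α → γ) :
    mutInfo μ (g ∘ X) Y ≤ mutInfo μ X Y := by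
  classical
  have hfiber : ∀ c, (g ∘ X) ⁻¹' {c} = X ⁻¹' ↑(Finset.univ.filter fun a ↦ g a = c) := fun c ↦ by
    ext; simp
  have key : ent μ (fun ω ↦ (X ω, Y ω)) - ent μ X ≤
      ent μ (fun ω ↦ ((g ∘ X) ω, Y ω)) - ent μ (g ∘ X) := by
    rw [ent_pair_sub_ent _ hY, ent_pair_sub_ent _ hY, neg_le_neg_iff]
    calc
      _ ≤ ∑ c, ∑ b, ∑ a with g a = c, μ.real (X ⁻¹' {a} ∩ Y ⁻¹' {b}) *
            Real.log (μ.real (X ⁻¹' {a} ∩ Y ⁻¹' {b}) / μ.real (X ⁻¹' {a})) := by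
        gcongr with c _ b _
        have hq := sum_measureReal_preimage_singleton_inter (μ := μ) hX
          (Finset.univ.filter fun a ↦ g a = c) Set.univ
        simp only [Set.inter_univ] at hq
        rw [hfiber, ← sum_measureReal_preimage_singleton_inter hX, ← hq]
        exact Real.sum_mul_log_div_sum_le_sum_mul_log_div _ (fun _ _ ↦ measureReal_nonneg)
          (fun _ _ ↦ measureReal_nonneg) fun _ _ h ↦
            le_antisymm (h ▸ measureReal_mono Set.inter_subset_left) measureReal_nonneg
      _ = _ := by
        rw [Finset.sum_comm, Finset.sum_comm (γ := α)]
        exact Finset.sum_congr rfl fun b _ ↦ Finset.sum_fiberwise _ g _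
  simp only [mutInfo, condEnt]
  linarith

end MeasureTheory

theorem mutInfo_joint_le_of_subset {Ω : Type*} [MeasurableSpace Ω] {μ : Measure Ω}
    [IsFiniteMeasure μ] {K : ℕ} {α : Fin K → Type*} [∀ k, Fintype (α k)]
    [∀ k, MeasurableSpace (α k)] [∀ k, MeasurableSingletonClass (α k)]
    {β : Type*} [Fintype β] [MeasurableSpace β] [MeasurableSingletonClass β]
    {W : (k : Fin K) → Ω → α k} {Y : Ω → β} (hW : ∀ k, Measurable (W k)) (hY : Measurable Y)
    {S T : Finset (Fin K)} (hST : S ⊆ T) :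
    mutInfo μ (joint W S) Y ≤ mutInfo μ (joint W T) Y := by
  have hm : Measurable (joint W T) := measurable_pi_lambda _ fun k ↦ hW k
  exact mutInfo_comp_le hm hY fun (f : (k : T) → α k) (k : S) ↦ f ⟨k, hST k.2⟩

theorem stmt0_general {Ω : Type*} [MeasurableSpace Ω] (μ : Measure Ω) [IsProbabilityMeasure μ]
    {K : ℕ} {α : Fin K → Type*} [∀ k, Fintype (α k)]
    [∀ k, MeasurableSpace (α k)] [∀ k, MeasurableSingletonClass (α k)]
    {β : Type*} [Fintype β] [MeasurableSpace β] [MeasurableSingletonClass β]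
    (W : (k : Fin K) → Ω → α k) (Y : Ω → β) (i : Fin K)
    (hW : ∀ k, Measurable (W k)) (hY : Measurable Y)
    (hpos : ∀ S ⊆ Finset.univ.erase i, S.Nonempty → 0 < ent μ (joint W S))
    (ε d : ℝ)
    (hne : (((Finset.univ.erase i).powerset).filter (fun S => S.Nonempty)).Nonempty)
    (hyp : condEnt μ (joint W (Finset.univ.erase i)) Y ≥
      (1 - (((Finset.univ.erase i).powerset).filter (fun S => S.Nonempty)).inf' hne
          (fun S => (1 + ε - d) * ent μ (joint W S) /
            ent μ (joint W (Finset.univ.erase i)))) *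
        ent μ (joint W (Finset.univ.erase i))) :
    ∀ S ⊆ Finset.univ.erase i, S.Nonempty →
      condEnt μ (joint W S) Y ≥ (d - ε) * ent μ (joint W S) := by
  intro S hS hSne
  set T := (Finset.univ : Finset (Fin K)).erase i
  have hT : 0 < ent μ (joint W T) := by
    obtain ⟨S₀, hS₀⟩ := hne
    rw [Finset.mem_filter, Finset.mem_powerset] at hS₀
    exact hpos T subset_rfl (hS₀.2.mono hS₀.1)
  have hεstar := Finset.inf'_le (fun S ↦ (1 + ε - d) * ent μ (joint W S) / ent μ (joint W T))
    (Finset.mem_filter.2 ⟨Finset.mem_powerset.2 hS, hSne⟩)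
  rw [le_div_iff₀ hT] at hεstar
  have hdp := mutInfo_joint_le_of_subset (μ := μ) hW hY hS
  simp only [mutInfo] at hdp
  linarith

/-- Lemma 1 of the paper. If the equivocation of the full message set
`W_{𝒦∖{i}}` at receiver `i` is at least `1 - ε*` (in the form
`H(W_{𝒦∖{i}} | Y) ≥ (1 - ε*) · H(W_{𝒦∖{i}})`), where
`ε* = min_{∅ ≠ S ⊆ 𝒦∖{i}} (1 + ε - d) · H(W_S) / H(W_{𝒦∖{i}})`, then every nonempty subset
`S ⊆ 𝒦∖{i}` of messages has equivocation at least `d - ε`: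
`H(W_S | Y) ≥ (d - ε) · H(W_S)`. -/
theorem stmt0 {Ω : Type*} [MeasurableSpace Ω] (μ : Measure Ω) [IsProbabilityMeasure μ]
    {K : ℕ} {α : Fin K → Type*} [∀ k, Fintype (α k)]
    [∀ k, MeasurableSpace (α k)] [∀ k, MeasurableSingletonClass (α k)]
    {β : Type*} [Fintype β] [MeasurableSpace β] [MeasurableSingletonClass β]
    (W : (k : Fin K) → Ω → α k) (Y : Ω → β) (i : Fin K)
    (hW : ∀ k, Measurable (W k)) (hY : Measurable Y)
    (hpos : ∀ S ⊆ Finset.univ.erase i, S.Nonempty → 0 < ent μ (joint W S))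
    (ε d : ℝ) (hε : 0 < ε) (hd0 : 0 ≤ d) (hd1 : d ≤ 1)
    (hne : (((Finset.univ.erase i).powerset).filter (fun S => S.Nonempty)).Nonempty)
    (hyp : condEnt μ (joint W (Finset.univ.erase i)) Y ≥
      (1 - (((Finset.univ.erase i).powerset).filter (fun S => S.Nonempty)).inf' hne
          (fun S => (1 + ε - d) * ent μ (joint W S) /
            ent μ (joint W (Finset.univ.erase i)))) *
        ent μ (joint W (Finset.univ.erase i))) :
    ∀ S ⊆ Finset.univ.erase i, S.Nonempty →
      condEnt μ (joint W S) Y ≥ (d - ε) * ent μ (joint W S) :=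
  stmt0_general μ W Y i hW hY hpos ε d hne hyp
end
end

section
/- Let (X_k)_{k∈{1,...,K}} be finitely-valued random variables on a probability space that are mutually independent, let Y be a further finitely-valued random variable, and let M, L, L' be pairwise disjoint subsets of {1,...,K} with M nonempty. Then I(X_M ; Y | X_{L'}) ≤ I(X_M ; Y | X_{L∪L'}). (Conditioning on additional interfering signals, which are independent of X_M, cannot decrease the mutual information with the channel output.) -/
/-!
As `X_M` is independent of `X_{L'}` and of `X_{L ∪ L'}`, both conditional entropies
`H(X_M | X_{L'})` and `H(X_M | X_{L ∪ L'})` equal `H(X_M)`, so the claim is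
`H(X_M | Y, X_{L ∪ L'}) ≤ H(X_M | Y, X_{L'})`: conditioning on the finer variable
`(Y, X_{L ∪ L'})` cannot increase entropy. That is submodularity of entropy,
`H(A,B,C) + H(C) ≤ H(A,C) + H(B,C)`, which follows by summing `log x ≤ x - 1` at
`x = p(a,c) p(b,c) / (p(a,b,c) p(c))` against the joint law `p(a,b,c)`.
-/

open MeasureTheory ProbabilityTheory

noncomputable section

open Real Finset

section FiniteValued

variable {Ω : Type*} [MeasurableSpace Ω] (μ : Measure Ω)

lemma sum_measureReal_preimage_singleton_inter [IsFiniteMeasure μ] {τ : Type*} [Fintype τ]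
    [MeasurableSpace τ] [MeasurableSingletonClass τ] {U : Ω → τ} (hU : Measurable U)
    (S : Set Ω) :
    ∑ u, μ.real (U ⁻¹' {u} ∩ S) = μ.real S := by
  simp_rw [← measureReal_restrict_apply (hU (measurableSet_singleton _))]
  rw [sum_measureReal_preimage_singleton _ fun u _ ↦ hU (measurableSet_singleton u), coe_univ,
    Set.preimage_univ, measureReal_restrict_apply .univ, Set.univ_inter]

lemma sum_measureReal_prodMk_preimage_singleton [IsFiniteMeasure μ] {τ σ : Type*} [Fintype τ]
    [MeasurableSpace τ] [MeasurableSingletonClass τ] {U : Ω → τ} (hU : Measurable U)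
    (V : Ω → σ) (s : σ) :
    ∑ u, μ.real ((fun ω ↦ (U ω, V ω)) ⁻¹' {(u, s)}) = μ.real (V ⁻¹' {s}) := by
  simp_rw [← Set.singleton_prod_singleton, Set.mk_preimage_prod]
  exact sum_measureReal_preimage_singleton_inter μ hU _

lemma sum_measureReal_preimage_singleton_eq_one [IsProbabilityMeasure μ] {τ : Type*} [Fintype τ]
    [MeasurableSpace τ] [MeasurableSingletonClass τ] {U : Ω → τ} (hU : Measurable U) :
    ∑ u, μ.real (U ⁻¹' {u}) = 1 := by
  simpa using sum_measureReal_preimage_singleton_inter μ hU Set.univ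

lemma measureReal_comp_preimage_singleton [IsFiniteMeasure μ] {τ σ : Type*} [Fintype τ]
    [DecidableEq σ] [MeasurableSpace τ] [MeasurableSingletonClass τ] {U : Ω → τ}
    (hU : Measurable U) (g : τ → σ) (s : σ) :
    μ.real ((g ∘ U) ⁻¹' {s}) = ∑ u with g u = s, μ.real (U ⁻¹' {u}) := by
  rw [sum_measureReal_preimage_singleton _ fun u _ ↦ hU (measurableSet_singleton u)]
  congr 1
  ext ω
  simp

lemma measureReal_preimage_singleton_le_comp [IsFiniteMeasure μ] {τ σ : Type*} {U : Ω → τ}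
    (g : τ → σ) (u : τ) :
    μ.real (U ⁻¹' {u}) ≤ μ.real ((g ∘ U) ⁻¹' {g u}) :=
  measureReal_mono fun ω (hω : U ω = u) ↦ show g (U ω) = g u by rw [hω]

lemma sum_measureReal_preimage_singleton_mul_comp [IsFiniteMeasure μ] {τ σ : Type*} [Fintype τ]
    [Fintype σ] [MeasurableSpace τ] [MeasurableSingletonClass τ] {U : Ω → τ}
    (hU : Measurable U) (g : τ → σ) (F : σ → ℝ) :
    ∑ u, μ.real (U ⁻¹' {u}) * F (g u) = ∑ s, μ.real ((g ∘ U) ⁻¹' {s}) * F s := by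
  classical
  simp_rw [measureReal_comp_preimage_singleton μ hU, sum_mul]
  rw [← sum_fiberwise univ g]
  refine sum_congr rfl fun s _ ↦ sum_congr rfl fun u hu ↦ ?_
  rw [(mem_filter.mp hu).2]

lemma ent_comp_eq_neg_sum [IsFiniteMeasure μ] {τ σ : Type*} [Fintype τ] [Fintype σ]
    [MeasurableSpace τ] [MeasurableSingletonClass τ] {U : Ω → τ} (hU : Measurable U)
    (g : τ → σ) :
    ent μ (g ∘ U) = -∑ u, μ.real (U ⁻¹' {u}) * log (μ.real ((g ∘ U) ⁻¹' {g u})) := by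
  rw [sum_measureReal_preimage_singleton_mul_comp μ hU g fun s ↦ log (μ.real ((g ∘ U) ⁻¹' {s})),
    ← sum_neg_distrib]
  simp only [ent, negMulLog, neg_mul, measureReal_def]

end FiniteValued

lemma ent_comp_of_injective {Ω τ σ : Type*} [MeasurableSpace Ω] [Fintype τ] [Fintype σ]
    (μ : Measure Ω) (U : Ω → τ) {g : τ → σ} (hg : g.Injective) :
    ent μ (g ∘ U) = ent μ U := by
  refine (Fintype.sum_of_injective g hg _ _ (fun s hs ↦ ?_) fun u ↦ ?_).symm
  · have : (g ∘ U) ⁻¹' {s} = ∅ := Set.eq_empty_of_forall_notMem fun ω hω ↦ hs ⟨U ω, hω⟩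
    simp [this]
  · rw [Set.preimage_comp, ← Set.image_singleton, hg.preimage_image]

lemma ent_prod_of_indepFun {Ω τ σ : Type*} [MeasurableSpace Ω] [Fintype τ] [Fintype σ]
    [MeasurableSpace τ] [MeasurableSingletonClass τ] [MeasurableSpace σ]
    [MeasurableSingletonClass σ] (μ : Measure Ω) [IsProbabilityMeasure μ] {U : Ω → τ}
    {V : Ω → σ} (hU : Measurable U) (hV : Measurable V) (hUV : IndepFun U V μ) :
    ent μ (fun ω ↦ (U ω, V ω)) = ent μ U + ent μ V := by
  have hmul (u : τ) (v : σ) : μ.real ((fun ω ↦ (U ω, V ω)) ⁻¹' {(u, v)}) =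
      μ.real (U ⁻¹' {u}) * μ.real (V ⁻¹' {v}) := by
    rw [← Set.singleton_prod_singleton, Set.mk_preimage_prod, measureReal_def,
      hUV.measure_inter_preimage_eq_mul _ _ (measurableSet_singleton u)
        (measurableSet_singleton v), ENNReal.toReal_mul, measureReal_def, measureReal_def]
  simp only [ent, ← measureReal_def, Fintype.sum_prod_type, hmul, negMulLog_mul,
    sum_add_distrib, ← sum_mul, ← mul_sum, sum_measureReal_preimage_singleton_eq_one μ hU,
    sum_measureReal_preimage_singleton_eq_one μ hV, one_mul]

lemma mul_log_add_log_sub_log_sub_log_le {p x y z : ℝ} (hp : 0 ≤ p) (hx : p ≤ x) (hy : p ≤ y)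
    (hz : p ≤ z) :
    p * (log x + log y - log p - log z) ≤ x * y / z - p := by
  rcases hp.eq_or_lt with rfl | hp
  · simp only [zero_mul, sub_zero]
    exact div_nonneg (mul_nonneg hx hy) hz
  have hx := hp.trans_le hx
  have hy := hp.trans_le hy
  have hz := hp.trans_le hz
  calc p * (log x + log y - log p - log z) = p * log (x * y / (p * z)) := by
        rw [log_div (by positivity) (by positivity), log_mul hx.ne' hy.ne',
          log_mul hp.ne' hz.ne']
        ring
    _ ≤ p * (x * y / (p * z) - 1) :=
        mul_le_mul_of_nonneg_left (log_le_sub_one_of_pos (by positivity)) hp.le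
    _ = x * y / z - p := by field_simp

lemma ent_submodular {Ω α β γ : Type*} [MeasurableSpace Ω] [Fintype α] [Fintype β] [Fintype γ]
    [MeasurableSpace α] [MeasurableSingletonClass α] [MeasurableSpace β]
    [MeasurableSingletonClass β] [MeasurableSpace γ] [MeasurableSingletonClass γ]
    (μ : Measure Ω) [IsProbabilityMeasure μ] {A : Ω → α} {B : Ω → β} {C : Ω → γ}
    (hA : Measurable A) (hB : Measurable B) (hC : Measurable C) :
    ent μ (fun ω ↦ (A ω, B ω, C ω)) + ent μ C ≤
      ent μ (fun ω ↦ (A ω, C ω)) + ent μ (fun ω ↦ (B ω, C ω)) := by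
  set T : Ω → α × β × γ := fun ω ↦ (A ω, B ω, C ω)
  have hT : Measurable T := hA.prodMk (hB.prodMk hC)
  set p : α × β × γ → ℝ := fun t ↦ μ.real (T ⁻¹' {t})
  set qAC : α × γ → ℝ := fun x ↦ μ.real ((fun ω ↦ (A ω, C ω)) ⁻¹' {x})
  set qBC : β × γ → ℝ := fun x ↦ μ.real ((fun ω ↦ (B ω, C ω)) ⁻¹' {x})
  set r : γ → ℝ := fun c ↦ μ.real (C ⁻¹' {c})
  have hABC : ent μ T = -∑ t, p t * log (p t) := ent_comp_eq_neg_sum μ hT id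
  have hAC : ent μ (fun ω ↦ (A ω, C ω)) = -∑ t, p t * log (qAC (t.1, t.2.2)) :=
    ent_comp_eq_neg_sum μ hT fun t ↦ (t.1, t.2.2)
  have hBC : ent μ (fun ω ↦ (B ω, C ω)) = -∑ t, p t * log (qBC t.2) :=
    ent_comp_eq_neg_sum μ hT Prod.snd
  have hC' : ent μ C = -∑ t, p t * log (r t.2.2) :=
    ent_comp_eq_neg_sum μ hT fun t ↦ t.2.2
  have hp : ∑ t, p t = 1 := sum_measureReal_preimage_singleton_eq_one μ hT
  have hr : ∑ c, r c = 1 := sum_measureReal_preimage_singleton_eq_one μ hC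
  have hQ : ∑ t : α × β × γ, qAC (t.1, t.2.2) * qBC t.2 / r t.2.2 = 1 := by
    simp only [Fintype.sum_prod_type]
    calc ∑ a, ∑ b, ∑ c, qAC (a, c) * qBC (b, c) / r c
        = ∑ a, ∑ c, ∑ b, qAC (a, c) * qBC (b, c) / r c := sum_congr rfl fun _ _ ↦ sum_comm
      _ = ∑ c, (∑ a, qAC (a, c)) * (∑ b, qBC (b, c)) / r c := by
        rw [sum_comm]
        simp only [sum_mul_sum, sum_div]
      _ = ∑ c, r c := by
        refine sum_congr rfl fun c _ ↦ ?_
        simp only [qAC, qBC, sum_measureReal_prodMk_preimage_singleton μ hA,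
          sum_measureReal_prodMk_preimage_singleton μ hB]
        exact mul_self_div_self _
      _ = 1 := hr
  have hpoint (t : α × β × γ) :
      p t * (log (qAC (t.1, t.2.2)) + log (qBC t.2) - log (p t) - log (r t.2.2)) ≤
        qAC (t.1, t.2.2) * qBC t.2 / r t.2.2 - p t :=
    mul_log_add_log_sub_log_sub_log_le measureReal_nonneg
      (measureReal_preimage_singleton_le_comp μ (U := T) (fun t ↦ (t.1, t.2.2)) t)
      (measureReal_preimage_singleton_le_comp μ (U := T) Prod.snd t)
      (measureReal_preimage_singleton_le_comp μ (U := T) (fun t ↦ t.2.2) t)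
  have hsum := sum_le_sum (s := univ) fun t _ ↦ hpoint t
  simp only [mul_sub, mul_add, sum_sub_distrib, sum_add_distrib, hQ, hp] at hsum
  rw [hABC, hAC, hBC, hC']
  linarith

lemma condMutInfo_comp_le_of_indepFun {Ω α β ζ ζ' : Type*} [MeasurableSpace Ω] [Fintype α]
    [Fintype β] [Fintype ζ] [Fintype ζ'] [MeasurableSpace α] [MeasurableSingletonClass α]
    [MeasurableSpace β] [MeasurableSingletonClass β] [MeasurableSpace ζ]
    [MeasurableSingletonClass ζ] [MeasurableSpace ζ'] [MeasurableSingletonClass ζ']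
    (μ : Measure Ω) [IsProbabilityMeasure μ] {A : Ω → α} {Y : Ω → β} {Z : Ω → ζ} (f : ζ → ζ')
    (hA : Measurable A) (hY : Measurable Y) (hZ : Measurable Z) (hAZ : IndepFun A Z μ) :
    condMutInfo μ A Y (f ∘ Z) ≤ condMutInfo μ A Y Z := by
  have hf : Measurable f := measurable_of_finite f
  have hfZ : Measurable (f ∘ Z) := hf.comp hZ
  have hA_Z := ent_prod_of_indepFun μ hA hZ hAZ
  have hA_fZ := ent_prod_of_indepFun μ hA hfZ (hAZ.comp measurable_id hf)
  -- `Z` determines `f ∘ Z`, so adjoining `f ∘ Z` to `Z` does not change entropies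
  let e : β × ζ → ζ × β × ζ' := fun x ↦ (x.2, x.1, f x.2)
  have he : e.Injective := fun x y h ↦ Prod.ext (congrArg (·.2.1) h) (congrArg Prod.fst h)
  have hYZ : ent μ (fun ω ↦ (Y ω, Z ω)) = ent μ (fun ω ↦ (Z ω, Y ω, f (Z ω))) :=
    (ent_comp_of_injective μ _ he).symm
  have hAYZ : ent μ (fun ω ↦ (A ω, Y ω, Z ω)) = ent μ (fun ω ↦ (A ω, Z ω, Y ω, f (Z ω))) :=
    (ent_comp_of_injective μ _ (Function.injective_id.prodMap he)).symm
  have hsub := ent_submodular μ hA hZ (hY.prodMk hfZ)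
  simp only [condMutInfo, condEnt, Function.comp_apply] at hA_fZ hsub ⊢
  linarith

theorem stmt4_general {Ω : Type*} [MeasurableSpace Ω] (μ : Measure Ω) [IsProbabilityMeasure μ]
    {K : ℕ} {α : Fin K → Type*} [∀ k, Fintype (α k)]
    [mα : ∀ k, MeasurableSpace (α k)] [∀ k, MeasurableSingletonClass (α k)]
    {β : Type*} [Fintype β] [MeasurableSpace β] [MeasurableSingletonClass β]
    (X : (k : Fin K) → Ω → α k) (Y : Ω → β)
    (hX : ∀ k, Measurable (X k)) (hY : Measurable Y)
    (hind : iIndepFun X μ)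
    (M L L' : Finset (Fin K))
    (hML : Disjoint M L) (hML' : Disjoint M L') :
    condMutInfo μ (joint X M) Y (joint X L') ≤
      condMutInfo μ (joint X M) Y (joint X (L ∪ L')) := by
  have hjoint (S : Finset (Fin K)) : Measurable (joint X S) := measurable_pi_lambda _ fun k ↦ hX k
  have hindep : IndepFun (joint X M) (joint X (L ∪ L')) μ :=
    hind.indepFun_finset M (L ∪ L') (disjoint_union_right.mpr ⟨hML, hML'⟩) hX
  have hL' : joint X L' = restrict₂ subset_union_right ∘ joint X (L ∪ L') := rfl
  rw [hL']
  exact condMutInfo_comp_le_of_indepFun μ _ (hjoint M) hY (hjoint _) hindep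

/-- generalized Lemma 3. For mutually independent finitely-valued random
variables `(X_k)_{k ∈ {1,…,K}}`, a further finitely-valued random variable `Y`, and pairwise
disjoint index sets `M, L, L' ⊆ {1,…,K}` with `M` nonempty, conditioning on the additional
independent signals `X_L` cannot decrease mutual information:
`I(X_M ; Y | X_{L'}) ≤ I(X_M ; Y | X_{L ∪ L'})`. -/
theorem stmt4 {Ω : Type*} [MeasurableSpace Ω] (μ : Measure Ω) [IsProbabilityMeasure μ]
    {K : ℕ} {α : Fin K → Type*} [∀ k, Fintype (α k)]
    [mα : ∀ k, MeasurableSpace (α k)] [∀ k, MeasurableSingletonClass (α k)]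
    {β : Type*} [Fintype β] [MeasurableSpace β] [MeasurableSingletonClass β]
    (X : (k : Fin K) → Ω → α k) (Y : Ω → β)
    (hX : ∀ k, Measurable (X k)) (hY : Measurable Y)
    (hind : iIndepFun X μ)
    (M L L' : Finset (Fin K)) (hM : M.Nonempty)
    (hML : Disjoint M L) (hML' : Disjoint M L') (hLL' : Disjoint L L') :
    condMutInfo μ (joint X M) Y (joint X L') ≤
      condMutInfo μ (joint X M) Y (joint X (L ∪ L')) :=
  stmt4_general μ (mα := mα) X Y hX hY hind M L L' hML hML'
end
end

section
/- Let X_1, ..., X_K, Z be finitely-valued random variables on a probability space such that the family {X_1, ..., X_K, Z} is mutually independent, and let Y be a further finitely-valued random variable. Assume the following symmetry (exchangeability) condition: for all indices k ≠ i in {1,...,K} and every subset L of {1,...,K}\{k,i}, I(X_k ; Y | X_L, Z) = I(X_i ; Y | X_L, Z). Then for every subset S of {1,...,K} with 0 < |S| < K, letting S^c = {1,...,K}\S, one has (1/|S^c|)·I(X_{S^c} ; Y | Z) ≤ (1/|S|)·I(X_S ; Y | X_{S^c}, Z). -/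
open MeasureTheory ProbabilityTheory

noncomputable section

universe u

/-- Value types of the extended family `{X_1, …, X_K, Z}` (index `none` corresponds to `Z`). -/
def extType {K : ℕ} (α : Fin K → Type u) (ζ : Type u) : Option (Fin K) → Type u
  | none => ζ
  | some k => α k

/-- Measurable-space structures on the extended family `{X_1, …, X_K, Z}`. -/
def extMeas {K : ℕ} {α : Fin K → Type u} {ζ : Type u}
    (mα : ∀ k, MeasurableSpace (α k)) (mζ : MeasurableSpace ζ) :
    (j : Option (Fin K)) → MeasurableSpace (extType α ζ j)
  | none => mζ
  | some k => mα k

/-- The extended family `{X_1, …, X_K, Z}` viewed as a single indexed family of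
random variables. -/
def extFam {Ω : Type*} {K : ℕ} {α : Fin K → Type u} {ζ : Type u}
    (X : (k : Fin K) → Ω → α k) (Z : Ω → ζ) :
    (j : Option (Fin K)) → Ω → extType α ζ j
  | none => Z
  | some k => X k


/-!
Conditional mutual information is nonnegative (Gibbs' inequality), so the chain rule gives
`I(A ; Y | C) ≤ I(A ; Y | T, C)` whenever `I(A ; T | C) = 0`. For the mutually independent
`X_1, …, X_K, Z` this says that moving more of the `X_j` into the conditioning can only increase
`I(X_k ; Y | ·)`.

Let `c = I(X_i ; Y | X_{Sᶜ}, Z)` for some `i ∈ S`; by symmetry it is the same for every `i ∈ S`.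
Expanding `I(X_S ; Y | X_{Sᶜ}, Z)` by the chain rule and shrinking every conditioning set back to
`X_{Sᶜ}` gives `I(X_S ; Y | X_{Sᶜ}, Z) ≥ |S| c`. Expanding `I(X_{Sᶜ} ; Y | Z)` the same way and
enlarging every conditioning set to `X_{Sᶜ \ {k}}`, each term becomes, by symmetry,
`I(X_i ; Y | X_{Sᶜ \ {k}}, Z) ≤ c`, so `I(X_{Sᶜ} ; Y | Z) ≤ |Sᶜ| c`.
-/

open Real Finset

section Entropy

variable {Ω : Type*} [MeasurableSpace Ω] {μ : Measure Ω}

lemma sub_mul_div_le_mul_log {r s t u : ℝ} (hr : 0 ≤ r) (hrs : r ≤ s) (hrt : r ≤ t)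
    (hsu : s ≤ u) : r - s * t / u ≤ r * (log r + log u - log s - log t) := by
  rcases hr.eq_or_lt with rfl | hr
  · simpa using div_nonneg (mul_nonneg hrs hrt) (hrs.trans hsu)
  have hs : 0 < s := hr.trans_le hrs
  have ht : 0 < t := hr.trans_le hrt
  have hu : 0 < u := hs.trans_le hsu
  have hlog : 1 - (r * u / (s * t))⁻¹ ≤ log (r * u / (s * t)) :=
    one_sub_inv_le_log_of_pos (by positivity)
  rw [log_div (by positivity) (by positivity), log_mul hr.ne' hu.ne',
    log_mul hs.ne' ht.ne', inv_div] at hlog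
  have key : r * (1 - s * t / (r * u)) = r - s * t / u := by field_simp
  nlinarith [mul_le_mul_of_nonneg_left hlog hr.le]

lemma measureReal_preimage_singleton_le_comp_s5 {α β : Type*} [IsFiniteMeasure μ] (W : Ω → α)
    (f : α → β) (a : α) : μ.real (W ⁻¹' {a}) ≤ μ.real ((fun ω => f (W ω)) ⁻¹' {f a}) :=
  measureReal_mono fun ω (h : W ω = a) => congrArg f h

variable {α β γ δ : Type*} [Fintype α] [Fintype β] [Fintype γ] [Fintype δ]

lemma ent_comp_of_injective_s5 (W : Ω → α) {e : α → β} (he : e.Injective) :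
    ent μ (fun ω => e (W ω)) = ent μ W := by
  refine (Fintype.sum_of_injective e he _ _ (fun b hb => ?_) (fun a => ?_)).symm
  · have : (fun ω => e (W ω)) ⁻¹' {b} = ∅ :=
      Set.eq_empty_of_forall_notMem fun ω hω => hb ⟨W ω, hω⟩
    simp [this]
  · congr 3
    ext ω
    simp [he.eq_iff]

lemma ent_eq_of_leftInverse {V : Ω → α} {W : Ω → β} (f : α → β) (g : β → α)
    (hgf : Function.LeftInverse g f) (hW : ∀ ω, W ω = f (V ω)) : ent μ W = ent μ V := by
  rw [funext hW]
  exact ent_comp_of_injective_s5 V hgf.injective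

lemma condMutInfo_eq_ent (A : Ω → α) (B : Ω → β) (C : Ω → γ) :
    condMutInfo μ A B C = ent μ (fun ω => (A ω, C ω)) + ent μ (fun ω => (B ω, C ω))
      - ent μ (fun ω => (A ω, (B ω, C ω))) - ent μ C := by
  simp only [condMutInfo, condEnt]
  ring

lemma condMutInfo_comm (A : Ω → α) (B : Ω → β) (C : Ω → γ) :
    condMutInfo μ A B C = condMutInfo μ B A C := by
  have h : ent μ (fun ω => (A ω, (B ω, C ω))) = ent μ (fun ω => (B ω, (A ω, C ω))) :=
    ent_eq_of_leftInverse (fun x => (x.2.1, (x.1, x.2.2))) (fun x => (x.2.1, (x.1, x.2.2)))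
      (fun _ => rfl) (fun _ => rfl)
  rw [condMutInfo_eq_ent, condMutInfo_eq_ent, h]
  ring

lemma condMutInfo_relabel_left {A : Ω → α} {A' : Ω → δ} (Y : Ω → β) (C : Ω → γ) (e : α → δ)
    (he : e.Injective) (hA' : ∀ ω, A' ω = e (A ω)) :
    condMutInfo μ A' Y C = condMutInfo μ A Y C := by
  have hAC : ent μ (fun ω => (e (A ω), C ω)) = ent μ (fun ω => (A ω, C ω)) :=
    ent_comp_of_injective_s5 (e := Prod.map e id) (fun ω => (A ω, C ω))
      (he.prodMap Function.injective_id)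
  have hAYC : ent μ (fun ω => (e (A ω), (Y ω, C ω))) = ent μ (fun ω => (A ω, (Y ω, C ω))) :=
    ent_comp_of_injective_s5 (e := Prod.map e id) (fun ω => (A ω, (Y ω, C ω)))
      (he.prodMap Function.injective_id)
  rw [funext hA', condMutInfo_eq_ent, condMutInfo_eq_ent, hAC, hAYC]

lemma condMutInfo_relabel_right (A : Ω → α) (Y : Ω → β) {C : Ω → γ} {C' : Ω → δ} (e : γ → δ)
    (he : e.Injective) (hC' : ∀ ω, C' ω = e (C ω)) :
    condMutInfo μ A Y C' = condMutInfo μ A Y C := by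
  have hAC : ent μ (fun ω => (A ω, e (C ω))) = ent μ (fun ω => (A ω, C ω)) :=
    ent_comp_of_injective_s5 (e := Prod.map id e) (fun ω => (A ω, C ω))
      (Function.injective_id.prodMap he)
  have hYC : ent μ (fun ω => (Y ω, e (C ω))) = ent μ (fun ω => (Y ω, C ω)) :=
    ent_comp_of_injective_s5 (e := Prod.map id e) (fun ω => (Y ω, C ω))
      (Function.injective_id.prodMap he)
  have hAYC : ent μ (fun ω => (A ω, (Y ω, e (C ω)))) = ent μ (fun ω => (A ω, (Y ω, C ω))) :=
    ent_comp_of_injective_s5 (e := Prod.map id (Prod.map id e)) (fun ω => (A ω, (Y ω, C ω)))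
      (Function.injective_id.prodMap (Function.injective_id.prodMap he))
  have hC : ent μ (fun ω => e (C ω)) = ent μ C := ent_comp_of_injective_s5 _ he
  rw [funext hC', condMutInfo_eq_ent, condMutInfo_eq_ent, hAC, hYC, hAYC, hC]

lemma condMutInfo_chain_rule (A : Ω → α) (B : Ω → δ) (Y : Ω → β) (C : Ω → γ) :
    condMutInfo μ (fun ω => (A ω, B ω)) Y C
      = condMutInfo μ B Y C + condMutInfo μ A Y (fun ω => (B ω, C ω)) := by
  have h1 : ent μ (fun ω => ((A ω, B ω), C ω)) = ent μ (fun ω => (A ω, (B ω, C ω))) :=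
    ent_eq_of_leftInverse (fun x => ((x.1, x.2.1), x.2.2)) (fun x => (x.1.1, (x.1.2, x.2)))
      (fun _ => rfl) (fun _ => rfl)
  have h2 : ent μ (fun ω => ((A ω, B ω), (Y ω, C ω)))
      = ent μ (fun ω => (A ω, (Y ω, (B ω, C ω)))) :=
    ent_eq_of_leftInverse (fun x => ((x.1, x.2.2.1), (x.2.1, x.2.2.2)))
      (fun x => (x.1.1, (x.2.1, (x.1.2, x.2.2)))) (fun _ => rfl) (fun _ => rfl)
  have h3 : ent μ (fun ω => (B ω, (Y ω, C ω))) = ent μ (fun ω => (Y ω, (B ω, C ω))) :=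
    ent_eq_of_leftInverse (fun x => (x.2.1, (x.1, x.2.2))) (fun x => (x.2.1, (x.1, x.2.2)))
      (fun _ => rfl) (fun _ => rfl)
  rw [condMutInfo_eq_ent, condMutInfo_eq_ent, condMutInfo_eq_ent, h1, h2, h3]
  ring

lemma condMutInfo_eq_zero_of_subsingleton [Subsingleton α] (A : Ω → α) (Y : Ω → β)
    (C : Ω → γ) : condMutInfo μ A Y C = 0 := by
  have hAC : ent μ C = ent μ (fun ω => (A ω, C ω)) :=
    ent_comp_of_injective_s5 (e := Prod.snd) (fun ω => (A ω, C ω)) Prod.snd_injective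
  have hAYC : ent μ (fun ω => (Y ω, C ω)) = ent μ (fun ω => (A ω, (Y ω, C ω))) :=
    ent_comp_of_injective_s5 (e := Prod.snd) (fun ω => (A ω, (Y ω, C ω))) Prod.snd_injective
  rw [condMutInfo_eq_ent, ← hAC, ← hAYC]
  ring

variable [MeasurableSpace α] [MeasurableSingletonClass α] {W : Ω → α}

lemma sum_measureReal_fiber {κ : Type*} [DecidableEq κ] [IsFiniteMeasure μ]
    (hW : Measurable W) (f : α → κ) (b : κ) :
    ∑ a with f a = b, μ.real (W ⁻¹' {a}) = μ.real ((fun ω => f (W ω)) ⁻¹' {b}) := by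
  rw [sum_measureReal_preimage_singleton _ fun a _ => hW (measurableSet_singleton a)]
  congr 1
  ext ω
  simp

lemma sum_measureReal_preimage_singleton_univ [IsFiniteMeasure μ] (hW : Measurable W) :
    ∑ a, μ.real (W ⁻¹' {a}) = μ.real Set.univ := by
  rw [sum_measureReal_preimage_singleton _ fun a _ => hW (measurableSet_singleton a)]
  simp

lemma sum_measureReal_prod_preimage_singleton {κ : Type*} [IsFiniteMeasure μ]
    (hW : Measurable W) (C : Ω → κ) (c : κ) :
    ∑ a, μ.real ((fun ω => (W ω, C ω)) ⁻¹' {(a, c)}) = μ.real (C ⁻¹' {c}) := by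
  have hinter : ∀ a, (fun ω => (W ω, C ω)) ⁻¹' {(a, c)} = W ⁻¹' {a} ∩ C ⁻¹' {c} := by
    intro a
    ext ω
    simp
  simp only [hinter, ← measureReal_restrict_apply (hW (measurableSet_singleton _))]
  rw [sum_measureReal_preimage_singleton_univ hW, measureReal_restrict_apply_univ]

lemma ent_comp_eq_neg_sum_s5 [IsFiniteMeasure μ] (hW : Measurable W) (f : α → β) :
    ent μ (fun ω => f (W ω))
      = -∑ a, μ.real (W ⁻¹' {a}) * log (μ.real ((fun ω => f (W ω)) ⁻¹' {f a})) := by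
  classical
  rw [← sum_fiberwise _ f, ent, ← sum_neg_distrib]
  refine sum_congr rfl fun b _ => ?_
  have hfib : ∀ a ∈ ({a | f a = b} : Finset α), μ.real (W ⁻¹' {a})
      * log (μ.real ((fun ω => f (W ω)) ⁻¹' {f a}))
      = μ.real (W ⁻¹' {a}) * log (μ.real ((fun ω => f (W ω)) ⁻¹' {b})) := by
    intro a ha
    rw [(mem_filter.1 ha).2]
  rw [sum_congr rfl hfib, ← sum_mul, sum_measureReal_fiber hW f b, negMulLog, neg_mul]
  rfl

variable [MeasurableSpace β] [MeasurableSingletonClass β] [MeasurableSpace γ]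
  [MeasurableSingletonClass γ] [MeasurableSpace δ] [MeasurableSingletonClass δ]

lemma condMutInfo_eq_sum [IsFiniteMeasure μ] {A : Ω → α} {B : Ω → β} {C : Ω → γ}
    (hA : Measurable A) (hB : Measurable B) (hC : Measurable C) :
    condMutInfo μ A B C = ∑ w : α × β × γ, μ.real ((fun ω => (A ω, (B ω, C ω))) ⁻¹' {w})
      * (log (μ.real ((fun ω => (A ω, (B ω, C ω))) ⁻¹' {w})) + log (μ.real (C ⁻¹' {w.2.2}))
        - log (μ.real ((fun ω => (A ω, C ω)) ⁻¹' {(w.1, w.2.2)}))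
        - log (μ.real ((fun ω => (B ω, C ω)) ⁻¹' {w.2}))) := by
  set W := fun ω => (A ω, (B ω, C ω))
  have hW : Measurable W := hA.prodMk (hB.prodMk hC)
  have hAC : ent μ (fun ω => (A ω, C ω))
      = -∑ w, μ.real (W ⁻¹' {w}) * log (μ.real ((fun ω => (A ω, C ω)) ⁻¹' {(w.1, w.2.2)})) :=
    ent_comp_eq_neg_sum_s5 hW (fun w => (w.1, w.2.2))
  have hBC : ent μ (fun ω => (B ω, C ω))
      = -∑ w, μ.real (W ⁻¹' {w}) * log (μ.real ((fun ω => (B ω, C ω)) ⁻¹' {w.2})) :=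
    ent_comp_eq_neg_sum_s5 hW Prod.snd
  have hC : ent μ C = -∑ w, μ.real (W ⁻¹' {w}) * log (μ.real (C ⁻¹' {w.2.2})) :=
    ent_comp_eq_neg_sum_s5 hW (fun w => w.2.2)
  have hABC : ent μ W = -∑ w, μ.real (W ⁻¹' {w}) * log (μ.real (W ⁻¹' {w})) :=
    ent_comp_eq_neg_sum_s5 hW id
  rw [condMutInfo_eq_ent, hAC, hBC, hC, hABC]
  simp only [mul_add, mul_sub, sum_add_distrib, sum_sub_distrib]
  ring

/-- Gibbs' inequality, comparing the joint law of `(A, B, C)` with `p(a,c) p(b,c) / p(c)`,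
which has the same total mass. -/
theorem condMutInfo_nonneg [IsFiniteMeasure μ] {A : Ω → α} {B : Ω → β} {C : Ω → γ}
    (hA : Measurable A) (hB : Measurable B) (hC : Measurable C) :
    0 ≤ condMutInfo μ A B C := by
  have hmass : ∑ w : α × β × γ, μ.real ((fun ω => (A ω, C ω)) ⁻¹' {(w.1, w.2.2)})
      * μ.real ((fun ω => (B ω, C ω)) ⁻¹' {w.2}) / μ.real (C ⁻¹' {w.2.2})
      = μ.real Set.univ := by
    calc
      _ = ∑ c, (∑ a, μ.real ((fun ω => (A ω, C ω)) ⁻¹' {(a, c)}))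
          * (∑ b, μ.real ((fun ω => (B ω, C ω)) ⁻¹' {(b, c)})) / μ.real (C ⁻¹' {c}) := by
        rw [Fintype.sum_prod_type]
        simp only [Fintype.sum_prod_type_right, sum_mul_sum, sum_div]
        exact sum_comm
      _ = μ.real Set.univ := by
        -- `x * x / x = x` holds at `x = 0` too, so no case split on `p(c) = 0` is needed
        simp only [sum_measureReal_prod_preimage_singleton hA,
          sum_measureReal_prod_preimage_singleton hB, mul_self_div_self,
          sum_measureReal_preimage_singleton_univ hC]
  have hW : Measurable fun ω => (A ω, (B ω, C ω)) := hA.prodMk (hB.prodMk hC)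
  rw [condMutInfo_eq_sum hA hB hC]
  calc
    (0 : ℝ) = ∑ w : α × β × γ, (μ.real ((fun ω => (A ω, (B ω, C ω))) ⁻¹' {w})
        - μ.real ((fun ω => (A ω, C ω)) ⁻¹' {(w.1, w.2.2)})
          * μ.real ((fun ω => (B ω, C ω)) ⁻¹' {w.2}) / μ.real (C ⁻¹' {w.2.2})) := by
      rw [sum_sub_distrib, hmass, sum_measureReal_preimage_singleton_univ hW, sub_self]
    _ ≤ _ := sum_le_sum fun w _ => sub_mul_div_le_mul_log measureReal_nonneg
      (measureReal_preimage_singleton_le_comp_s5 _ (fun w => (w.1, w.2.2)) w)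
      (measureReal_preimage_singleton_le_comp_s5 _ Prod.snd w)
      (measureReal_preimage_singleton_le_comp_s5 (fun ω => (A ω, C ω)) Prod.snd _)

variable [IsProbabilityMeasure μ] {A : Ω → α} {C : Ω → γ}

lemma ent_prod_of_indepFun_s5 (hA : Measurable A) (hC : Measurable C) (hAC : IndepFun A C μ) :
    ent μ (fun ω => (A ω, C ω)) = ent μ A + ent μ C := by
  have hfac : ∀ a c, μ.real ((fun ω => (A ω, C ω)) ⁻¹' {(a, c)})
      = μ.real (A ⁻¹' {a}) * μ.real (C ⁻¹' {c}) := by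
    intro a c
    have hinter : (fun ω => (A ω, C ω)) ⁻¹' {(a, c)} = A ⁻¹' {a} ∩ C ⁻¹' {c} := by
      ext ω
      simp
    rw [hinter, measureReal_def, hAC.measure_inter_preimage_eq_mul _ _
      (measurableSet_singleton a) (measurableSet_singleton c), ENNReal.toReal_mul]
    rfl
  simp only [ent, ← measureReal_def, Fintype.sum_prod_type, hfac, negMulLog_mul,
    sum_add_distrib, ← sum_mul, ← mul_sum, sum_measureReal_preimage_singleton_univ hA,
    sum_measureReal_preimage_singleton_univ hC, probReal_univ, one_mul]

lemma condMutInfo_eq_zero_of_indepFun {T : Ω → β} (hA : Measurable A) (hT : Measurable T)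
    (hC : Measurable C) (h : IndepFun A (fun ω => (T ω, C ω)) μ) :
    condMutInfo μ A T C = 0 := by
  rw [condMutInfo_eq_ent, ent_prod_of_indepFun_s5 hA hC (h.comp measurable_id measurable_snd),
    ent_prod_of_indepFun_s5 hA (hT.prodMk hC) h]
  ring

/-- Both chain-rule expansions of `I((Y, T) ; A | C)`, with `I(T ; A | C) = 0`. -/
lemma condMutInfo_le_condMutInfo_prod_of_indepFun {T : Ω → β} {Y : Ω → δ} (hA : Measurable A)
    (hY : Measurable Y) (hT : Measurable T) (hC : Measurable C)
    (h : IndepFun A (fun ω => (T ω, C ω)) μ) :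
    condMutInfo μ A Y C ≤ condMutInfo μ A Y (fun ω => (T ω, C ω)) := by
  have hYT := condMutInfo_chain_rule Y T A C (μ := μ)
  have hTY := condMutInfo_chain_rule T Y A C (μ := μ)
  have hswap : condMutInfo μ (fun ω => (Y ω, T ω)) A C
      = condMutInfo μ (fun ω => (T ω, Y ω)) A C :=
    condMutInfo_relabel_left A C Prod.swap Prod.swap_injective fun _ => rfl
  have hTA : condMutInfo μ T A C = 0 := by
    rw [condMutInfo_comm]
    exact condMutInfo_eq_zero_of_indepFun hA hT hC h
  have hpos : 0 ≤ condMutInfo μ T A (fun ω => (Y ω, C ω)) :=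
    condMutInfo_nonneg hT hA (hY.prodMk hC)
  rw [condMutInfo_comm, condMutInfo_comm A]
  linarith

end Entropy

section Restrict

variable {ι : Type*} [DecidableEq ι] {E : ι → Type*}

lemma Finset.restrict₂_union_injective (T B : Finset ι) :
    Function.Injective fun f : (i : (T ∪ B : Finset ι)) → E i =>
      ((restrict₂ subset_union_left f : (i : T) → E i),
        (restrict₂ subset_union_right f : (i : B) → E i)) := by
  intro f g h
  funext i
  rcases mem_union.1 i.2 with hiT | hiB
  · exact congrFun (congrArg Prod.fst h) ⟨i, hiT⟩
  · exact congrFun (congrArg Prod.snd h) ⟨i, hiB⟩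

lemma Finset.restrict₂_insert_injective (k : ι) (T : Finset ι) :
    Function.Injective fun f : (i : (insert k T : Finset ι)) → E i =>
      (f ⟨k, mem_insert_self k T⟩, (restrict₂ (subset_insert k T) f : (i : T) → E i)) := by
  intro f g h
  funext i
  rcases mem_insert.1 i.2 with hik | hiT
  · obtain rfl : i = ⟨k, mem_insert_self k T⟩ := Subtype.ext hik
    exact congrArg Prod.fst h
  · exact congrFun (congrArg Prod.snd h) ⟨i, hiT⟩

end Restrict

section Family

variable {Ω : Type*} [MeasurableSpace Ω] {μ : Measure Ω}
  {K : ℕ} {α : Fin K → Type u} {ζ : Type u} {X : (k : Fin K) → Ω → α k} {Z : Ω → ζ}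

section Independence

variable [mα : ∀ k, MeasurableSpace (α k)] [mζ : MeasurableSpace ζ]

lemma measurable_joint (hX : ∀ k, Measurable (X k)) (T : Finset (Fin K)) :
    Measurable (joint X T) :=
  measurable_pi_lambda _ fun j => hX j

lemma indepFun_joint_prod (hX : ∀ k, Measurable (X k)) (hZ : Measurable Z)
    (hind : iIndepFun (m := extMeas mα mζ) (extFam X Z) μ) {k : Fin K} {B : Finset (Fin K)}
    (hk : k ∉ B) : IndepFun (X k) (fun ω => (joint X B ω, Z ω)) μ := by
  let _ := extMeas mα mζ
  have hmeas : ∀ j, Measurable (extFam X Z j)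
    | none => hZ
    | some j => hX j
  have hdisj : Disjoint {some k} (insert none (B.image some)) := by
    simpa [mem_image] using hk
  have hψ : Measurable fun g : (j : (insert none (B.image some) : Finset _)) → extType α ζ j =>
      ((fun j : B => g ⟨some j, by simp⟩ : (j : B) → α j), (g ⟨none, by simp⟩ : ζ)) :=
    (measurable_pi_lambda _ fun j => measurable_pi_apply _).prodMk (measurable_pi_apply _)
  exact (hind.indepFun_finset _ _ hdisj hmeas).comp (measurable_pi_apply ⟨some k, by simp⟩) hψ

end Independence

section Relabel

variable [∀ k, Fintype (α k)] [Fintype ζ] {β : Type*} [Fintype β] {Y : Ω → β}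

lemma condMutInfo_joint_empty {γ : Type*} [Fintype γ] (C : Ω → γ) :
    condMutInfo μ (joint X ∅) Y C = 0 :=
  condMutInfo_eq_zero_of_subsingleton _ _ _

lemma condMutInfo_cond_joint_union {δ : Type*} [Fintype δ] (A : Ω → δ) (T B : Finset (Fin K)) :
    condMutInfo μ A Y (fun ω => (joint X T ω, (joint X B ω, Z ω)))
      = condMutInfo μ A Y (fun ω => (joint X (T ∪ B) ω, Z ω)) := by
  have he : Function.Injective fun x : ((j : (T ∪ B : Finset (Fin K))) → α j) × ζ =>
      (restrict₂ subset_union_left x.1, (restrict₂ subset_union_right x.1, x.2)) := by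
    intro x y h
    simp only [Prod.mk.injEq] at h
    exact Prod.ext (restrict₂_union_injective T B (Prod.ext h.1 h.2.1)) h.2.2
  exact condMutInfo_relabel_right A Y _ he fun _ => rfl

lemma condMutInfo_joint_insert {γ : Type*} [Fintype γ] (k : Fin K) (T : Finset (Fin K))
    (C : Ω → γ) :
    condMutInfo μ (joint X (insert k T)) Y C
      = condMutInfo μ (joint X T) Y C + condMutInfo μ (X k) Y (fun ω => (joint X T ω, C ω)) := by
  rw [← condMutInfo_chain_rule]
  exact (condMutInfo_relabel_left Y C _ (restrict₂_insert_injective k T) fun _ => rfl).symm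

end Relabel

variable [∀ k, Fintype (α k)] [Fintype ζ]
  [mα : ∀ k, MeasurableSpace (α k)] [∀ k, MeasurableSingletonClass (α k)]
  [mζ : MeasurableSpace ζ] [MeasurableSingletonClass ζ]
  {β : Type*} [Fintype β] [MeasurableSpace β] [MeasurableSingletonClass β] {Y : Ω → β}
  [IsProbabilityMeasure μ]

lemma condMutInfo_le_of_cond_subset (hX : ∀ k, Measurable (X k)) (hZ : Measurable Z)
    (hY : Measurable Y) (hind : iIndepFun (m := extMeas mα mζ) (extFam X Z) μ) {k : Fin K}
    {B B' : Finset (Fin K)} (hBB' : B ⊆ B') (hk : k ∉ B') :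
    condMutInfo μ (X k) Y (fun ω => (joint X B ω, Z ω))
      ≤ condMutInfo μ (X k) Y (fun ω => (joint X B' ω, Z ω)) := by
  obtain ⟨T, rfl⟩ : ∃ T, B' = T ∪ B := ⟨B' \ B, (sdiff_union_of_subset hBB').symm⟩
  have hsplit : Measurable fun x : ((j : (T ∪ B : Finset (Fin K))) → α j) × ζ =>
      (restrict₂ subset_union_left x.1, (restrict₂ subset_union_right x.1, x.2)) :=
    ((measurable_restrict₂ _).comp measurable_fst).prodMk
      (((measurable_restrict₂ _).comp measurable_fst).prodMk measurable_snd)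
  have hindep : IndepFun (X k) (fun ω => (joint X T ω, (joint X B ω, Z ω))) μ :=
    (indepFun_joint_prod hX hZ hind hk).comp measurable_id hsplit
  rw [← condMutInfo_cond_joint_union]
  exact condMutInfo_le_condMutInfo_prod_of_indepFun (hX k) hY (measurable_joint hX T)
    ((measurable_joint hX B).prodMk hZ) hindep

lemma sum_condMutInfo_le_condMutInfo_joint (hX : ∀ k, Measurable (X k)) (hZ : Measurable Z)
    (hY : Measurable Y) (hind : iIndepFun (m := extMeas mα mζ) (extFam X Z) μ)
    {T B : Finset (Fin K)} (hTB : Disjoint T B) :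
    ∑ i ∈ T, condMutInfo μ (X i) Y (fun ω => (joint X B ω, Z ω))
      ≤ condMutInfo μ (joint X T) Y (fun ω => (joint X B ω, Z ω)) := by
  induction T using Finset.induction_on with
  | empty => rw [sum_empty, condMutInfo_joint_empty]
  | @insert k T hkT ih =>
    rw [disjoint_insert_left] at hTB
    have hmono : condMutInfo μ (X k) Y (fun ω => (joint X B ω, Z ω))
        ≤ condMutInfo μ (X k) Y (fun ω => (joint X T ω, (joint X B ω, Z ω))) := by
      rw [condMutInfo_cond_joint_union]
      exact condMutInfo_le_of_cond_subset hX hZ hY hind subset_union_right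
        (notMem_union.2 ⟨hkT, hTB.1⟩)
    rw [sum_insert hkT, condMutInfo_joint_insert]
    linarith [ih hTB.2]

lemma condMutInfo_joint_le_sum_erase (hX : ∀ k, Measurable (X k)) (hZ : Measurable Z)
    (hY : Measurable Y) (hind : iIndepFun (m := extMeas mα mζ) (extFam X Z) μ)
    (T : Finset (Fin K)) :
    condMutInfo μ (joint X T) Y Z
      ≤ ∑ k ∈ T, condMutInfo μ (X k) Y (fun ω => (joint X (T.erase k) ω, Z ω)) := by
  induction T using Finset.induction_on with
  | empty => rw [sum_empty, condMutInfo_joint_empty]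
  | @insert k T hkT ih =>
    have hmono : ∀ j ∈ T, condMutInfo μ (X j) Y (fun ω => (joint X (T.erase j) ω, Z ω))
        ≤ condMutInfo μ (X j) Y (fun ω => (joint X ((insert k T).erase j) ω, Z ω)) :=
      fun j _ => condMutInfo_le_of_cond_subset hX hZ hY hind
        (erase_subset_erase j (subset_insert k T)) (notMem_erase j _)
    rw [sum_insert hkT, erase_insert hkT, condMutInfo_joint_insert]
    linarith [sum_le_sum hmono]

end Family

/-- Appendix D, Lemma 4. Let `X_1, …, X_K, Z` be finitely-valued random
variables with `{X_1, …, X_K, Z}` mutually independent, and `Y` a further finitely-valued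
random variable. Under the symmetry condition
`I(X_k ; Y | X_L, Z) = I(X_i ; Y | X_L, Z)` for all `k ≠ i` and `L ⊆ {1,…,K} \ {k,i}`,
for every `S` with `0 < |S| < K` (writing `Sᶜ = {1,…,K} \ S`):
`(1/|Sᶜ|) · I(X_{Sᶜ} ; Y | Z) ≤ (1/|S|) · I(X_S ; Y | X_{Sᶜ}, Z)`. -/
theorem stmt5 {Ω : Type*} [MeasurableSpace Ω] (μ : Measure Ω) [IsProbabilityMeasure μ]
    {K : ℕ} {α : Fin K → Type u} {ζ : Type u}
    [∀ k, Fintype (α k)] [Fintype ζ]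
    [mα : ∀ k, MeasurableSpace (α k)] [∀ k, MeasurableSingletonClass (α k)]
    [mζ : MeasurableSpace ζ] [MeasurableSingletonClass ζ]
    {β : Type*} [Fintype β] [MeasurableSpace β] [MeasurableSingletonClass β]
    (X : (k : Fin K) → Ω → α k) (Z : Ω → ζ) (Y : Ω → β)
    (hX : ∀ k, Measurable (X k)) (hZ : Measurable Z) (hY : Measurable Y)
    (hind : iIndepFun (m := extMeas mα mζ) (extFam X Z) μ)
    (hsym : ∀ k i : Fin K, k ≠ i → ∀ L : Finset (Fin K), L ⊆ Finset.univ \ {k, i} →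
      condMutInfo μ (X k) Y (fun ω => (joint X L ω, Z ω)) =
        condMutInfo μ (X i) Y (fun ω => (joint X L ω, Z ω)))
    (S : Finset (Fin K)) (hS : 0 < S.card) (hSK : S.card < K) :
    (1 / ((Sᶜ : Finset (Fin K)).card : ℝ)) * condMutInfo μ (joint X Sᶜ) Y Z ≤
      (1 / (S.card : ℝ)) *
        condMutInfo μ (joint X S) Y (fun ω => (joint X Sᶜ ω, Z ω)) := by
  obtain ⟨i₀, hi₀⟩ := card_pos.mp hS
  have hi₀c : i₀ ∉ Sᶜ := fun h => mem_compl.1 h hi₀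
  have hswap : ∀ k L, k ∉ L → i₀ ∉ L →
      condMutInfo μ (X k) Y (fun ω => (joint X L ω, Z ω)) =
        condMutInfo μ (X i₀) Y (fun ω => (joint X L ω, Z ω)) := by
    intro k L hkL hiL
    rcases eq_or_ne k i₀ with rfl | hk
    · rfl
    refine hsym k i₀ hk L fun j hj => ?_
    simp only [mem_sdiff, mem_univ, mem_insert, mem_singleton, true_and]
    rintro (rfl | rfl) <;> contradiction
  set c := condMutInfo μ (X i₀) Y (fun ω => (joint X Sᶜ ω, Z ω))
  have hlower : (S.card : ℝ) * c
      ≤ condMutInfo μ (joint X S) Y (fun ω => (joint X Sᶜ ω, Z ω)) := by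
    refine le_trans ?_ (sum_condMutInfo_le_condMutInfo_joint hX hZ hY hind disjoint_compl_right)
    simpa using card_nsmul_le_sum S _ c fun i hi =>
      (hswap i Sᶜ (fun h => mem_compl.1 h hi) hi₀c).ge
  have hupper : condMutInfo μ (joint X Sᶜ) Y Z ≤ ((Sᶜ : Finset (Fin K)).card : ℝ) * c := by
    refine (condMutInfo_joint_le_sum_erase hX hZ hY hind Sᶜ).trans ?_
    simpa using sum_le_card_nsmul Sᶜ _ c fun k _ =>
      (hswap k _ (notMem_erase k _) fun h => hi₀c (mem_of_mem_erase h)).trans_le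
        (condMutInfo_le_of_cond_subset hX hZ hY hind (erase_subset k _) hi₀c)
  have hSc : (0 : ℝ) < (Sᶜ : Finset (Fin K)).card := by
    rw [card_compl, Fintype.card_fin]
    exact_mod_cast Nat.sub_pos_of_lt hSK
  have hS' : (0 : ℝ) < S.card := by exact_mod_cast hS
  calc
    _ ≤ c := by rw [one_div_mul_eq_div, div_le_iff₀ hSc]; linarith
    _ ≤ _ := by rw [one_div_mul_eq_div, le_div_iff₀ hS']; linarith
end
end
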